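/- arXiv:math/0607521 — 2 statements merged into one kernel-verified Lean document; each statement's English description precedes it below -/
import Mathlib

section
/- Let ω be a symmetric (r,r)-double form on V, let p ≥ 0 with p + r ≤ n, and let e₁,…,e_{p+r} be orthonormal vectors in V. Then (g^p·ω)(e₁∧…∧e_{p+r}, e₁∧…∧e_{p+r}) = p! Σ_{1≤i₁<i₂<…<i_r≤p+r} ω(e_{i₁}∧…∧e_{i_r}, e_{i₁}∧…∧e_{i_r}), where g^p·ω is the Kulkarni–Nomizu product. -/
/-!
On an orthonormal family, `g^p(u, v) = p! det ⟨uᵢ, vⱼ⟩` makes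
`g^p(e_{σ(1)},…,e_{σ(p)}; e_{ρ(1)},…,e_{ρ(p)})` vanish unless `ρ = σ ∘ (a ⊕ b)` with `a` permuting
the first `p` and `b` the last `r` slots. For such `ρ` the signs of `a` and `b` cancel against the
alternation of `g^p` and of `ω`, so each `σ` contributes `p!² r! ω(e_{σ(p+1)}∧…, e_{σ(p+1)}∧…)`;
grouping the `σ` by the set `σ{p+1,…,p+r}` gives `p! r!` copies of each increasing multi-index.
-/

open scoped BigOperators RealInnerProductSpace

namespace Weitzenbock

variable (V : Type) [NormedAddCommGroup V] [InnerProductSpace ℝ V]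

/-- A "raw" double form of bidegree `(p,q)`: a real-valued function of a `p`-tuple and a
`q`-tuple of vectors.  A genuine double form (an `ℝ`-bilinear form on `⋀ᵖV × ⋀^qV`) is the
same thing as such a function which is multilinear and alternating in each block of
arguments; this regularity is encoded by the type `DF` below. -/
abbrev DFr (p q : ℕ) : Type _ := (Fin p → V) → (Fin q → V) → ℝ

/-- A double form of bidegree `(p,q)` on `V`: an alternating multilinear map in `p` vector
arguments with values in alternating multilinear maps in `q` vector arguments; this is
exactly the data of a bilinear form `⋀ᵖV × ⋀^qV → ℝ`. -/
abbrev DF (p q : ℕ) : Type _ :=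
  AlternatingMap ℝ V (AlternatingMap ℝ V ℝ (Fin q)) (Fin p)

variable {V}

/-- The underlying raw double form of a double form. -/
def rawDF {p q : ℕ} (ω : DF V p q) : DFr V p q := fun x y => ω x y

/-- Transport a raw double form along equalities of the degrees. -/
def castDF {a b c d : ℕ} (h1 : a = b) (h2 : c = d) (ω : DFr V a c) : DFr V b d :=
  fun x y => ω (fun i => x (Fin.cast h1 i)) (fun j => y (Fin.cast h2 j))

/-- The Kulkarni–Nomizu product of double forms (in raw form):
`(ω₁·ω₂)(x₁∧…∧x_{p+r}, y₁∧…∧y_{q+s}) = (1/(p!r!q!s!)) Σ_{σ,ρ} ε(σ)ε(ρ)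
ω₁(x_{σ(1)}∧…∧x_{σ(p)}, y_{ρ(1)}∧…∧y_{ρ(q)}) ω₂(x_{σ(p+1)}∧…, y_{ρ(q+1)}∧…)`. -/
noncomputable def KN (p r q s : ℕ) (ω₁ : DFr V p q) (ω₂ : DFr V r s) :
    DFr V (p + r) (q + s) := fun x y =>
  ((p.factorial * r.factorial * q.factorial * s.factorial : ℕ) : ℝ)⁻¹ *
    ∑ σ : Equiv.Perm (Fin (p + r)), ∑ ρ : Equiv.Perm (Fin (q + s)),
      ((Equiv.Perm.sign σ : ℤ) : ℝ) * ((Equiv.Perm.sign ρ : ℤ) : ℝ) *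
        (ω₁ (fun a => x (σ (Fin.castAdd r a))) (fun c => y (ρ (Fin.castAdd s c))) *
          ω₂ (fun a => x (σ (Fin.natAdd p a))) (fun c => y (ρ (Fin.natAdd q c))))

/-- The metric `g` as a `(1,1)`-double form. -/
noncomputable def gD : DFr V 1 1 := fun x y => (inner ℝ (x 0) (y 0) : ℝ)

/-- The `k`-th Kulkarni–Nomizu power `g^k` of the metric. -/
noncomputable def gpow : (k : ℕ) → DFr V k k
  | 0 => fun _ _ => 1
  | (k + 1) => KN k 1 k 1 (gpow k) gD

/-- A raw `(p,p)`-double form is symmetric if `ω(u,v) = ω(v,u)`. -/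
def Symm (p : ℕ) (ω : DFr V p p) : Prop := ∀ x y, ω x y = ω y x

/-- The first Bianchi identity for a double form of bidegree `(p, q+1)`:
`Σ_{j=1}^{p+1} (−1)^j ω(x₁∧…∧x̂_j∧…∧x_{p+1}, x_j∧y₁∧…∧y_q) = 0`. -/
def Bianchi (p q : ℕ) (ω : DFr V p (q + 1)) : Prop :=
  ∀ (x : Fin (p + 1) → V) (y : Fin q → V),
    ∑ j : Fin (p + 1),
      (-1 : ℝ) ^ ((j : ℕ) + 1) * ω (j.removeNth x) (Fin.cons (x j) y) = 0

variable {n : ℕ}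

/-- The contraction of a double form with respect to an orthonormal basis:
`cω(x₁∧…∧x_p, y₁∧…∧y_q) = Σ_j ω(e_j∧x₁∧…∧x_p, e_j∧y₁∧…∧y_q)`. -/
noncomputable def contr (b : OrthonormalBasis (Fin n) ℝ V) (p q : ℕ)
    (ω : DFr V (p + 1) (q + 1)) : DFr V p q := fun x y =>
  ∑ j : Fin n, ω (Fin.cons (b j) x) (Fin.cons (b j) y)

/-- Iterated contraction `c^k`. -/
noncomputable def contrIter (b : OrthonormalBasis (Fin n) ℝ V) (p q : ℕ) :
    (k : ℕ) → DFr V (p + k) (q + k) → DFr V p q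
  | 0, ω => ω
  | (k + 1), ω => contrIter b p q k (contr b (p + k) (q + k) ω)

instance (p m : ℕ) : DecidablePred (fun f : Fin p → Fin m => StrictMono f) := fun f =>
  decidable_of_iff (∀ a b : Fin p, a < b → f a < f b)
    ⟨fun h _ _ hab => h _ _ hab, fun h _ _ hab => h hab⟩

/-- The natural inner product of two `(p,q)`-double forms with respect to an orthonormal
basis: `⟨ω₁,ω₂⟩ = Σ_{I,J increasing} ω₁(e_I,e_J) ω₂(e_I,e_J)`. -/
noncomputable def dfInner (b : OrthonormalBasis (Fin n) ℝ V) (p q : ℕ)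
    (ω₁ ω₂ : DFr V p q) : ℝ :=
  ∑ I : {f : Fin p → Fin n // StrictMono f}, ∑ J : {f : Fin q → Fin n // StrictMono f},
    ω₁ (fun a => b (I.1 a)) (fun c => b (J.1 c)) *
      ω₂ (fun a => b (I.1 a)) (fun c => b (J.1 c))

/-- The quadratic form `v ↦ −⟨v,v⟩` on `V`. -/
noncomputable def Qv : QuadraticForm ℝ V :=
  - LinearMap.BilinMap.toQuadraticMap (innerₗ V)

/-- The Clifford algebra of `(V, −⟨·,·⟩)`; via `CliffordAlgebra.equivExterior` it is
identified, as a vector space, with the exterior algebra `ΛV`. -/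
abbrev CA := CliffordAlgebra (Qv (V := V))

/-- A vector of `V` seen inside the Clifford algebra. -/
noncomputable def cvec (v : V) : CA (V := V) := CliffordAlgebra.ι (Qv (V := V)) v

/-- `ad_φ(ψ) = φ·ψ − ψ·φ` (Clifford products). -/
noncomputable def adC (φ ψ : CA (V := V)) : CA (V := V) := φ * ψ - ψ * φ

/-- The identification of the Clifford algebra with the exterior algebra `ΛV`. -/
noncomputable def toExt : CA (V := V) ≃ₗ[ℝ] ExteriorAlgebra ℝ V :=
  CliffordAlgebra.equivExterior (Qv (V := V))

/-- The scalar (degree zero) part of an element of `ΛV ≅ Cl(V)`. -/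
noncomputable def scalarPart (u : CA (V := V)) : ℝ :=
  ExteriorAlgebra.algebraMapInv (toExt u)

/-- The inner product on `ΛV ≅ Cl(V)` for which the wedge products of distinct vectors of
an orthonormal basis are orthonormal: `⟨u,v⟩` is the scalar part of `reverse(involute u)·v`. -/
noncomputable def cinner (u v : CA (V := V)) : ℝ :=
  scalarPart (CliffordAlgebra.reverse (CliffordAlgebra.involute u) * v)

/-- The `p`-vector `x₁ ∧ … ∧ x_p`, viewed in `ΛV ≅ Cl(V)`. -/
noncomputable def wedgeC (p : ℕ) (x : Fin p → V) : CA (V := V) :=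
  toExt.symm (ExteriorAlgebra.ιMulti ℝ p x)

/-- The Weitzenböck transformation of order `p` of a `(2,2)`-double form `ω`, relative to
the orthonormal basis `b`:
`N_p(ω)(ψ₁,ψ₂) = (1/4) Σ_{i<j} Σ_{k<l} ω(e_i∧e_j, e_k∧e_l) ⟨ad_{e_i·e_j}ψ₁, ad_{e_k·e_l}ψ₂⟩`. -/
noncomputable def Nw (b : OrthonormalBasis (Fin n) ℝ V) (p : ℕ) (ω : DFr V 2 2) :
    DFr V p p := fun x y =>
  (4 : ℝ)⁻¹ *
    ∑ i : Fin n, ∑ j : Fin n, ∑ k : Fin n, ∑ l : Fin n,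
      if i < j ∧ k < l then
        ω ![b i, b j] ![b k, b l] *
          cinner (adC (cvec (b i) * cvec (b j)) (wedgeC p x))
            (adC (cvec (b k) * cvec (b l)) (wedgeC p y))
      else 0

/-- A symmetric `(1,1)`-double form is positive definite if it is positive on every
nonzero vector. -/
def posDef11 (F : DFr V 1 1) : Prop := ∀ v : V, v ≠ 0 → 0 < F (fun _ => v) (fun _ => v)

lemma intCast_units_mul_self {R : Type*} [Ring R] (u : ℤˣ) :
    ((u : ℤ) : R) * ((u : ℤ) : R) = 1 := by
  rw [← Int.cast_mul, Int.units_coe_mul_self, Int.cast_one]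

section BlockPerm

open Equiv

variable {p r : ℕ}

def blockPerm (a : Perm (Fin p)) (b : Perm (Fin r)) : Perm (Fin (p + r)) :=
  finSumFinEquiv.permCongr (a.sumCongr b)

@[simp]
lemma blockPerm_castAdd (a : Perm (Fin p)) (b : Perm (Fin r)) (i : Fin p) :
    blockPerm a b (Fin.castAdd r i) = Fin.castAdd r (a i) := by
  simp [blockPerm, ← finSumFinEquiv_apply_left, permCongr_apply]

@[simp]
lemma blockPerm_natAdd (a : Perm (Fin p)) (b : Perm (Fin r)) (j : Fin r) :
    blockPerm a b (Fin.natAdd p j) = Fin.natAdd p (b j) := by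
  simp [blockPerm, ← finSumFinEquiv_apply_right, permCongr_apply]

lemma sign_blockPerm (a : Perm (Fin p)) (b : Perm (Fin r)) :
    Perm.sign (blockPerm a b) = Perm.sign a * Perm.sign b := by
  rw [blockPerm, Perm.sign_permCongr, Perm.sign_sumCongr]

lemma blockPerm_injective :
    Function.Injective fun ab : Perm (Fin p) × Perm (Fin r) => blockPerm ab.1 ab.2 :=
  (permCongr finSumFinEquiv).injective.comp Perm.sumCongrHom_injective

lemma exists_blockPerm_of_mapsTo_castAdd {μ : Perm (Fin (p + r))}
    (h : Set.MapsTo μ (Set.range (Fin.castAdd r)) (Set.range (Fin.castAdd r))) :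
    ∃ ab : Perm (Fin p) × Perm (Fin r), blockPerm ab.1 ab.2 = μ := by
  have hν : Set.MapsTo ((permCongr finSumFinEquiv).symm μ) (Set.range Sum.inl)
      (Set.range Sum.inl) := by
    rintro _ ⟨i, rfl⟩
    obtain ⟨i', hi'⟩ := h ⟨i, rfl⟩
    exact ⟨i', by rw [permCongr_symm_apply, finSumFinEquiv_apply_left, ← hi',
      finSumFinEquiv_symm_apply_castAdd]⟩
  obtain ⟨ab, hab⟩ := Perm.mem_sumCongrHom_range_of_perm_mapsTo_inl hν
  exact ⟨ab, by rw [blockPerm, ← Perm.sumCongrHom_apply, hab, apply_symm_apply]⟩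

lemma exists_blockPerm_of_mapsTo_natAdd {μ : Perm (Fin (p + r))}
    (h : Set.MapsTo μ (Set.range (Fin.natAdd p)) (Set.range (Fin.natAdd p))) :
    ∃ ab : Perm (Fin p) × Perm (Fin r), blockPerm ab.1 ab.2 = μ := by
  have hν : Set.MapsTo ((permCongr finSumFinEquiv).symm μ) (Set.range Sum.inr)
      (Set.range Sum.inr) := by
    rintro _ ⟨j, rfl⟩
    obtain ⟨j', hj'⟩ := h ⟨j, rfl⟩
    exact ⟨j', by rw [permCongr_symm_apply, finSumFinEquiv_apply_right, ← hj',
      finSumFinEquiv_symm_apply_natAdd]⟩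
  obtain ⟨ab, hab⟩ := Perm.mem_sumCongrHom_range_of_perm_mapsTo_inl
    ((Perm.perm_mapsTo_inl_iff_mapsTo_inr _).mpr hν)
  exact ⟨ab, by rw [blockPerm, ← Perm.sumCongrHom_apply, hab, apply_symm_apply]⟩

lemma sum_perm_eq_sum_blockPerm {M : Type*} [AddCommMonoid M] (F : Perm (Fin (p + r)) → M)
    (hF : ∀ μ : Perm (Fin (p + r)),
      ¬ Set.MapsTo μ (Set.range (Fin.castAdd r)) (Set.range (Fin.castAdd r)) → F μ = 0) :
    ∑ μ, F μ = ∑ ab : Perm (Fin p) × Perm (Fin r), F (blockPerm ab.1 ab.2) := by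
  classical
  rw [← Finset.sum_image blockPerm_injective.injOn]
  refine (Finset.sum_subset (Finset.subset_univ _) fun μ _ hμ => hF μ fun h => hμ ?_).symm
  obtain ⟨ab, rfl⟩ := exists_blockPerm_of_mapsTo_castAdd h
  exact Finset.mem_image_of_mem _ (Finset.mem_univ ab)

end BlockPerm

section Gpow

open Equiv Matrix

lemma sum_sign_mul_det_castSucc_mul_last {R : Type*} [CommRing R] {p : ℕ}
    (A : Matrix (Fin (p + 1)) (Fin (p + 1)) R) :
    ∑ ρ : Perm (Fin (p + 1)), ((Perm.sign ρ : ℤ) : R) *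
      ((of fun i j : Fin p => A i.castSucc (ρ j.castSucc)).det *
        A (Fin.last p) (ρ (Fin.last p))) = p.factorial * A.det := by
  have hτ (τ : Perm (Fin p)) (i : Fin p) : blockPerm τ 1 i.castSucc = (τ i).castSucc :=
    blockPerm_castAdd τ 1 i
  have hlast (τ : Perm (Fin p)) : blockPerm τ 1 (Fin.last p) = Fin.last p :=
    blockPerm_natAdd τ 1 0
  calc _ = ∑ τ : Perm (Fin p), ((Perm.sign τ : ℤ) : R) * ∑ ρ : Perm (Fin (p + 1)),
        ((Perm.sign ρ : ℤ) : R) * ∏ i, (A.submatrix (blockPerm τ 1) id)ᵀ (ρ i) i := by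
        simp_rw [det_apply', Finset.sum_mul, Finset.mul_sum]
        rw [Finset.sum_comm]
        refine Finset.sum_congr rfl fun τ _ => Finset.sum_congr rfl fun ρ _ => ?_
        rw [Fin.prod_univ_castSucc]
        simp only [transpose_apply, submatrix_apply, id_eq, of_apply, hτ, hlast]
        ring
    _ = ∑ τ : Perm (Fin p), ((Perm.sign τ : ℤ) : R) * ((Perm.sign τ : ℤ) * A.det) := by
        refine Finset.sum_congr rfl fun τ _ => ?_
        rw [← det_apply', det_transpose, det_permute, sign_blockPerm, Perm.sign_one, mul_one]
    _ = p.factorial * A.det := by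
        simp_rw [← mul_assoc, intCast_units_mul_self, one_mul]
        rw [Finset.sum_const, Finset.card_univ, Fintype.card_perm, Fintype.card_fin,
          nsmul_eq_mul]

lemma gpow_eq_factorial_mul_det (p : ℕ) (u v : Fin p → V) :
    gpow p u v = p.factorial * (of fun i j => ⟪u i, v j⟫).det := by
  induction p with
  | zero => simp [gpow]
  | succ p ih =>
    have hcast (i : Fin p) : Fin.castAdd 1 i = i.castSucc := rfl
    have hlast : Fin.natAdd p (0 : Fin 1) = Fin.last p := rfl
    have hσ (σ : Perm (Fin (p + 1))) :
        ∑ ρ : Perm (Fin (p + 1)), ((Perm.sign σ : ℤ) : ℝ) * ((Perm.sign ρ : ℤ) : ℝ) *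
          (p.factorial * (of fun i j : Fin p => ⟪u (σ i.castSucc), v (ρ j.castSucc)⟫).det *
            ⟪u (σ (Fin.last p)), v (ρ (Fin.last p))⟫) =
          p.factorial * p.factorial * (of fun i j => ⟪u i, v j⟫).det := by
      have hA := sum_sign_mul_det_castSucc_mul_last (of fun i j => ⟪u (σ i), v j⟫)
      have hperm : (of fun i j => ⟪u (σ i), v j⟫).det =
          Perm.sign σ * (of fun i j => ⟪u i, v j⟫).det :=
        det_permute σ (of fun i j => ⟪u i, v j⟫)
      rw [hperm] at hA
      simp only [of_apply] at hA
      calc _ = ((Perm.sign σ : ℤ) : ℝ) * p.factorial * ∑ ρ : Perm (Fin (p + 1)),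
            ((Perm.sign ρ : ℤ) : ℝ) *
              ((of fun i j : Fin p => ⟪u (σ i.castSucc), v (ρ j.castSucc)⟫).det *
                ⟪u (σ (Fin.last p)), v (ρ (Fin.last p))⟫) := by
            rw [Finset.mul_sum]
            exact Finset.sum_congr rfl fun ρ _ => by ring
        _ = _ := by
            rw [hA]
            linear_combination
              ((p.factorial : ℝ) * p.factorial * (of fun i j => ⟪u i, v j⟫).det) *
                intCast_units_mul_self (R := ℝ) (Perm.sign σ)
    simp only [gpow, KN, gD, ih, hcast, hlast, hσ, Finset.sum_const, Finset.card_univ,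
      Fintype.card_perm, Fintype.card_fin, nsmul_eq_mul, Nat.factorial_succ, Nat.factorial_zero]
    have : (p.factorial : ℝ) ≠ 0 := by positivity
    push_cast
    field_simp

end Gpow

section GpowOrthonormal

open Equiv Matrix

variable {p : ℕ}

lemma gpow_comp_perm_right (u v : Fin p → V) (π : Perm (Fin p)) :
    gpow p u (v ∘ π) = Perm.sign π * gpow p u v := by
  rw [gpow_eq_factorial_mul_det, gpow_eq_factorial_mul_det, mul_left_comm]
  exact congrArg _ (det_permute' π (of fun i j => ⟪u i, v j⟫))

lemma gpow_self_of_orthonormal {u : Fin p → V} (hu : Orthonormal ℝ u) :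
    gpow p u u = p.factorial := by
  classical
  have h1 : (of fun i j => ⟪u i, u j⟫) = 1 := by
    ext i j
    rw [of_apply, orthonormal_iff_ite.mp hu, one_apply]
  rw [gpow_eq_factorial_mul_det, h1, det_one, mul_one]

lemma gpow_eq_zero_of_inner_eq_zero {u v : Fin p → V} (j : Fin p)
    (h : ∀ i, ⟪u i, v j⟫ = 0) :
    gpow p u v = 0 := by
  rw [gpow_eq_factorial_mul_det, det_eq_zero_of_column_eq_zero j h, mul_zero]

variable {r : ℕ}

lemma sum_sign_mul_gpow_mul_of_orthonormal {y : Fin (p + r) → V} (hy : Orthonormal ℝ y)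
    (φ : V [⋀^Fin r]→ₗ[ℝ] ℝ) :
    ∑ μ : Perm (Fin (p + r)), ((Perm.sign μ : ℤ) : ℝ) *
      (gpow p (fun a => y (Fin.castAdd r a)) (fun c => y (μ (Fin.castAdd r c))) *
        φ (fun c => y (μ (Fin.natAdd p c)))) =
      p.factorial * p.factorial * r.factorial * φ (fun c => y (Fin.natAdd p c)) := by
  rw [sum_perm_eq_sum_blockPerm]
  · have hblock (a : Perm (Fin p)) (b : Perm (Fin r)) :
        ((Perm.sign (blockPerm a b) : ℤ) : ℝ) *
          (gpow p (fun i => y (Fin.castAdd r i))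
              (fun c => y (blockPerm a b (Fin.castAdd r c))) *
            φ (fun c => y (blockPerm a b (Fin.natAdd p c)))) =
          p.factorial * φ (fun c => y (Fin.natAdd p c)) := by
      have hg : gpow p (fun i => y (Fin.castAdd r i)) (fun c => y (Fin.castAdd r (a c))) =
          Perm.sign a * p.factorial := by
        have hu : Orthonormal ℝ (fun i => y (Fin.castAdd r i)) :=
          hy.comp _ (Fin.castAdd_injective p r)
        rw [← gpow_self_of_orthonormal hu]
        exact gpow_comp_perm_right _ (fun i => y (Fin.castAdd r i)) a
      have hφ : φ (fun c => y (Fin.natAdd p (b c))) =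
          Perm.sign b • φ (fun c => y (Fin.natAdd p c)) :=
        φ.map_perm (fun c => y (Fin.natAdd p c)) b
      simp only [blockPerm_castAdd, blockPerm_natAdd, hg, hφ, sign_blockPerm, Units.smul_def,
        zsmul_eq_mul]
      push_cast
      linear_combination
        ((Perm.sign b : ℤ) * (Perm.sign b : ℤ) * p.factorial *
            φ (fun c => y (Fin.natAdd p c))) *
          intCast_units_mul_self (R := ℝ) (Perm.sign a) +
        (p.factorial * φ (fun c => y (Fin.natAdd p c))) *
          intCast_units_mul_self (R := ℝ) (Perm.sign b)
    simp only [hblock, Finset.sum_const, Finset.card_univ, Fintype.card_prod, Fintype.card_perm,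
      Fintype.card_fin, nsmul_eq_mul]
    push_cast
    ring
  · intro μ hμ
    obtain ⟨j, hj⟩ : ∃ j, μ (Fin.castAdd r j) ∉ Set.range (Fin.castAdd r) := by
      simpa [Set.MapsTo] using hμ
    rw [gpow_eq_zero_of_inner_eq_zero j fun i => hy.inner_eq_zero fun h => hj ⟨i, h⟩,
      zero_mul, mul_zero]

end GpowOrthonormal

section NatAddSorted

open Equiv Finset

variable {p r : ℕ}

noncomputable def natAddSorted (σ : Perm (Fin (p + r))) :
    {e : Fin r → Fin (p + r) // StrictMono e} :=
  ⟨σ ∘ Fin.natAdd p ∘ Tuple.sort (σ ∘ Fin.natAdd p),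
    (Tuple.monotone_sort _).strictMono_of_injective
      ((σ.injective.comp (Fin.natAdd_injective r p)).comp (Tuple.sort _).injective)⟩

lemma comp_natAdd_eq_natAddSorted_comp (σ : Perm (Fin (p + r))) :
    σ ∘ Fin.natAdd p = (natAddSorted σ).1 ∘ (Tuple.sort (σ ∘ Fin.natAdd p)).symm := by
  ext
  simp [natAddSorted]

lemma natAddSorted_eq_iff (σ : Perm (Fin (p + r)))
    (I : {e : Fin r → Fin (p + r) // StrictMono e}) :
    natAddSorted σ = I ↔ Set.range (σ ∘ Fin.natAdd p) = Set.range I.1 := by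
  rw [← (Tuple.sort (σ ∘ Fin.natAdd p)).surjective.range_comp, Subtype.ext_iff]
  exact ((natAddSorted σ).2.range_inj I.2).symm

lemma filter_natAddSorted_eq {I : {e : Fin r → Fin (p + r) // StrictMono e}}
    {σ₀ : Perm (Fin (p + r))} (hσ₀ : σ₀ ∘ Fin.natAdd p = I.1) :
    ({σ | natAddSorted σ = I} : Finset _) = univ.image fun ab : Perm (Fin p) × Perm (Fin r) =>
      σ₀ * blockPerm ab.1 ab.2 := by
  ext σ
  simp only [mem_filter, mem_univ, true_and, mem_image, natAddSorted_eq_iff, ← hσ₀]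
  constructor
  · intro hr
    obtain ⟨ab, hab⟩ := exists_blockPerm_of_mapsTo_natAdd (μ := σ₀⁻¹ * σ) <| by
      rintro _ ⟨j, rfl⟩
      obtain ⟨j', hj'⟩ : σ (Fin.natAdd p j) ∈ Set.range (σ₀ ∘ Fin.natAdd p) :=
        hr ▸ ⟨j, rfl⟩
      exact ⟨j', by simp [← hj']⟩
    exact ⟨ab, by rw [hab, mul_inv_cancel_left]⟩
  · rintro ⟨ab, rfl⟩
    have : (σ₀ * blockPerm ab.1 ab.2) ∘ Fin.natAdd p = (σ₀ ∘ Fin.natAdd p) ∘ ab.2 := by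
      ext
      simp
    rw [this, ab.2.surjective.range_comp]

lemma card_filter_natAddSorted (I : {e : Fin r → Fin (p + r) // StrictMono e}) :
    #{σ | natAddSorted σ = I} = p.factorial * r.factorial := by
  obtain ⟨σ₀, hσ₀⟩ :=
    Perm.exists_extending_pair (Fin.natAdd p) I.1 (Fin.natAdd_injective r p) I.2.injective
  rw [filter_natAddSorted_eq (funext hσ₀),
    card_image_of_injective _ fun _ _ h => blockPerm_injective (mul_left_cancel h),
    card_univ, Fintype.card_prod, Fintype.card_perm, Fintype.card_perm, Fintype.card_fin,
    Fintype.card_fin]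

lemma sum_perm_comp_natAdd {M : Type*} [AddCommMonoid M] (f : (Fin r → Fin (p + r)) → M)
    (hf : ∀ e (π : Perm (Fin r)), f (e ∘ π) = f e) :
    ∑ σ : Perm (Fin (p + r)), f (σ ∘ Fin.natAdd p) =
      (p.factorial * r.factorial) •
        ∑ I : {e : Fin r → Fin (p + r) // StrictMono e}, f I.1 := by
  rw [← sum_fiberwise univ natAddSorted, smul_sum]
  refine sum_congr rfl fun I _ => ?_
  rw [← card_filter_natAddSorted I, ← sum_const]
  refine sum_congr rfl fun σ hσ => ?_
  rw [comp_natAdd_eq_natAddSorted_comp, hf, (mem_filter.mp hσ).2]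

end NatAddSorted

lemma rawDF_comp_perm_self {r : ℕ} (ω : DF V r r) (u : Fin r → V) (π : Equiv.Perm (Fin r)) :
    rawDF ω (u ∘ π) (u ∘ π) = rawDF ω u u := by
  rw [rawDF, rawDF, ω.map_perm, AlternatingMap.smul_apply, (ω u).map_perm, smul_smul,
    Int.units_mul_self, one_smul]

section KNOrthonormal

open Equiv

variable {p r : ℕ}

lemma sum_sign_mul_sign_mul_gpow_mul_rawDF {x : Fin (p + r) → V} (hx : Orthonormal ℝ x)
    (ω : DF V r r) (σ : Perm (Fin (p + r))) :
    ∑ ρ : Perm (Fin (p + r)), ((Perm.sign σ : ℤ) : ℝ) * ((Perm.sign ρ : ℤ) : ℝ) *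
      (gpow p (fun a => x (σ (Fin.castAdd r a))) (fun c => x (ρ (Fin.castAdd r c))) *
        rawDF ω (fun a => x (σ (Fin.natAdd p a))) (fun c => x (ρ (Fin.natAdd p c)))) =
      p.factorial * p.factorial * r.factorial *
        rawDF ω (x ∘ (σ ∘ Fin.natAdd p)) (x ∘ (σ ∘ Fin.natAdd p)) := by
  rw [← Equiv.sum_comp (Equiv.mulLeft σ)]
  refine (Finset.sum_congr rfl fun μ _ => ?_).trans
    (sum_sign_mul_gpow_mul_of_orthonormal (hx.comp σ σ.injective)
      (ω fun a => x (σ (Fin.natAdd p a))))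
  simp only [Equiv.coe_mulLeft, Perm.mul_apply, Perm.sign_mul, Units.val_mul, Int.cast_mul,
    Function.comp_apply, rawDF]
  linear_combination
    (gpow p (fun a => x (σ (Fin.castAdd r a))) (fun c => x (σ (μ (Fin.castAdd r c)))) *
      ω (fun a => x (σ (Fin.natAdd p a))) (fun c => x (σ (μ (Fin.natAdd p c)))) *
        ((Perm.sign μ : ℤ) : ℝ)) * intCast_units_mul_self (R := ℝ) (Perm.sign σ)

end KNOrthonormal

variable (V)

theorem gpow_KN_sectional (r : ℕ) (ω : DF V r r) (p : ℕ) (x : Fin (p + r) → V)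
    (hx : Orthonormal ℝ x) :
    KN p r p r (gpow p) (rawDF ω) x x =
      (p.factorial : ℝ) *
        ∑ I : {f : Fin r → Fin (p + r) // StrictMono f},
          rawDF ω (fun a => x (I.1 a)) (fun a => x (I.1 a)) := by
  have hsort := sum_perm_comp_natAdd (fun e => rawDF ω (x ∘ e) (x ∘ e))
    fun e π => rawDF_comp_perm_self ω (x ∘ e) π
  simp only [KN, sum_sign_mul_sign_mul_gpow_mul_rawDF hx, ← Finset.mul_sum, hsort, nsmul_eq_mul]
  push_cast
  field_simp
  rfl

end Weitzenbock
end

section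
/- Let ω be a symmetric (2,2)-double form on V, let (e₁,…,e_n) be the orthonormal basis of V used in defining the Weitzenböck transformations, and let 1 ≤ p ≤ n−1. Then N_p(ω)(e₁∧…∧e_p, e₁∧…∧e_p) = N_{n−p}(ω)(e_{p+1}∧…∧e_n, e_{p+1}∧…∧e_n). (This is the identity of sectional curvatures expressed by the duality ∗N_p(ω) = N_{n−p}(ω) under the Hodge star operator.) -/
open scoped BigOperators RealInnerProductSpace

namespace Weitzenbock

variable (V : Type) [NormedAddCommGroup V] [InnerProductSpace ℝ V]

variable {V}

variable {n : ℕ}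

/-!
In the Clifford algebra, `e₁∧…∧e_p` and `e_{p+1}∧…∧e_n` are the Clifford products `e_S`, `e_T`
of orthonormal basis vectors, and `e_S e_T = Ω` is the volume element. Since `e_S² = ±1`, we get
`e_T = ±e_S Ω`. Every vector commutes or anticommutes with `Ω` according to the parity of `n`,
so even elements such as `e_i e_j` commute with `Ω`; hence `ad_{e_i e_j}(e_S Ω) = ad_{e_i e_j}(e_S) Ω`.
Finally, right multiplication by `Ω` preserves `⟨u, v⟩ = scalar part of reverse(involute u)·v`
whenever `u` and `v` have the same parity, because then `reverse(involute u)·v` is even and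
`reverse(involute Ω)·Ω = 1`. So the two Weitzenböck sums agree term by term.
-/

lemma Qv_apply (v : V) : Qv v = -⟪v, v⟫ := rfl

lemma cvec_mul_self_of_norm_eq_one {v : V} (hv : ‖v‖ = 1) : cvec v * cvec v = -1 := by
  rw [cvec, CliffordAlgebra.ι_sq_scalar, Qv_apply, real_inner_self_eq_norm_sq, hv]
  simp

lemma cvec_mul_cvec_of_inner_eq_zero {v w : V} (h : ⟪v, w⟫ = 0) :
    cvec v * cvec w = -(cvec w * cvec v) := by
  have h' : ⟪w, v⟫ = 0 := by rw [real_inner_comm, h]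
  refine CliffordAlgebra.ι_mul_ι_comm_of_isOrtho ?_
  rw [QuadraticMap.IsOrtho, Qv_apply, Qv_apply, Qv_apply, inner_add_add_self, h, h']
  ring

lemma involute_cvec_mul_cvec (v w : V) :
    CliffordAlgebra.involute (cvec v * cvec w) = cvec v * cvec w := by
  simp [cvec, CliffordAlgebra.involute_ι]

lemma associated_neg_Qv_apply (v w : V) :
    QuadraticMap.associated (R := ℝ) (-Qv) v w = ⟪v, w⟫ := by
  simp only [QuadraticMap.associated_apply, neg_apply, Qv_apply, neg_neg,
    inner_add_add_self, real_inner_comm v w]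
  simp
  ring

lemma contractLeft_prod_eq_zero (f : Module.Dual ℝ V) (L : List V) (hf : ∀ v ∈ L, f v = 0) :
    CliffordAlgebra.contractLeft (Q := (0 : QuadraticForm ℝ V)) f
      (L.map (ExteriorAlgebra.ι ℝ)).prod = 0 := by
  induction L with
  | nil => simp
  | cons x L ih =>
    rw [List.map_cons, List.prod_cons, CliffordAlgebra.contractLeft_ι_mul,
      ih (fun v hv => hf v (List.mem_cons_of_mem _ hv)), hf x List.mem_cons_self]
    simp

section Blade

variable {ι : Type*} {e : ι → V}

noncomputable def blade (e : ι → V) (L : List ι) : CA (V := V) :=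
  ((L.map e).map (CliffordAlgebra.ι Qv)).prod

@[simp] lemma blade_nil : blade e [] = 1 := rfl

@[simp] lemma blade_cons (a : ι) (L : List ι) : blade e (a :: L) = cvec (e a) * blade e L := rfl

lemma blade_append (L₁ L₂ : List ι) : blade e (L₁ ++ L₂) = blade e L₁ * blade e L₂ := by
  simp [blade]

lemma involute_blade (L : List ι) :
    CliffordAlgebra.involute (blade e L) = (-1 : ℝ) ^ L.length • blade e L := by
  rw [blade, CliffordAlgebra.involute_prod_map_ι, List.length_map]

variable (he : Orthonormal ℝ e)
include he

lemma cvec_mul_blade [DecidableEq ι] (a : ι) (L : List ι) :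
    cvec (e a) * blade e L = (-1 : ℝ) ^ (L.length + L.count a) • (blade e L * cvec (e a)) := by
  induction L with
  | nil => simp
  | cons x L ih =>
    rw [blade_cons, List.length_cons]
    by_cases hx : x = a
    · subst hx
      conv_lhs => rw [ih]
      rw [mul_smul_comm, List.count_cons_self, ← mul_assoc]
      congr 1
      ring
    · rw [← mul_assoc, cvec_mul_cvec_of_inner_eq_zero (he.2 (Ne.symm hx)), neg_mul, mul_assoc,
        ih, List.count_cons_of_ne hx, mul_smul_comm, ← mul_assoc, ← neg_smul]
      congr 1
      ring

lemma blade_mul_cvec_of_not_mem {a : ι} {L : List ι} (ha : a ∉ L) :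
    blade e L * cvec (e a) = (-1 : ℝ) ^ L.length • (cvec (e a) * blade e L) := by
  classical
  rw [cvec_mul_blade he, List.count_eq_zero_of_not_mem ha, add_zero, smul_smul, ← mul_pow]
  simp

lemma exists_blade_mul_self_of_nodup {L : List ι} (hL : L.Nodup) :
    ∃ k : ℕ, blade e L * blade e L = (-1 : ℝ) ^ k • 1 := by
  induction L with
  | nil => exact ⟨0, by simp⟩
  | cons a L ih =>
    obtain ⟨k, hk⟩ := ih hL.of_cons
    refine ⟨L.length + 1 + k, ?_⟩
    calc blade e (a :: L) * blade e (a :: L)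
        = cvec (e a) * (blade e L * cvec (e a)) * blade e L := by simp only [blade_cons, mul_assoc]
      _ = (-1 : ℝ) ^ L.length • (cvec (e a) * cvec (e a)) * (blade e L * blade e L) := by
        rw [blade_mul_cvec_of_not_mem he (List.nodup_cons.1 hL).1, mul_smul_comm, smul_mul_assoc,
          smul_mul_assoc, mul_assoc, mul_assoc, mul_assoc]
      _ = (-1 : ℝ) ^ (L.length + 1 + k) • 1 := by
        rw [cvec_mul_self_of_norm_eq_one (he.1 a), hk, smul_mul_smul, neg_one_mul, smul_neg,
          ← neg_smul, pow_add, pow_succ]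
        congr 1
        ring

lemma reverse_involute_blade_mul_blade (L : List ι) :
    CliffordAlgebra.reverse (CliffordAlgebra.involute (blade e L)) * blade e L = 1 := by
  induction L with
  | nil => simp
  | cons a L ih =>
    have hinv : CliffordAlgebra.involute (cvec (e a)) = -cvec (e a) :=
      CliffordAlgebra.involute_ι _
    have hrev : CliffordAlgebra.reverse (cvec (e a)) = cvec (e a) :=
      CliffordAlgebra.reverse_ι _
    calc _ = CliffordAlgebra.reverse (CliffordAlgebra.involute (blade e L)) *
          -(cvec (e a) * cvec (e a)) * blade e L := by
          rw [blade_cons, map_mul, CliffordAlgebra.reverse.map_mul, hinv, map_neg, hrev]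
          noncomm_ring
      _ = 1 := by rw [cvec_mul_self_of_norm_eq_one (he.1 a), neg_neg, mul_one, ih]

lemma toExt_blade {L : List ι} (hL : L.Nodup) :
    toExt (blade e L) = ((L.map e).map (ExteriorAlgebra.ι ℝ)).prod := by
  induction L with
  | nil => simp [toExt]
  | cons a L ih =>
    have hortho : ∀ v ∈ L.map e, QuadraticMap.associated (R := ℝ) (-Qv) (e a) v = 0 := by
      simp only [List.mem_map]
      rintro _ ⟨x, hx, rfl⟩
      rw [associated_neg_Qv_apply, he.2 (by rintro rfl; exact (List.nodup_cons.1 hL).1 hx)]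
    have htoExt (u : CA (V := V)) : toExt u =
        CliffordAlgebra.changeForm CliffordAlgebra.changeForm.associated_neg_proof u := rfl
    rw [blade_cons, htoExt, cvec, CliffordAlgebra.changeForm_ι_mul, ← htoExt, ih hL.of_cons,
      contractLeft_prod_eq_zero _ _ hortho, sub_zero]
    rfl

lemma wedgeC_eq_blade {p : ℕ} {g : Fin p → ι}
    (hg : Function.Injective g) : wedgeC p (fun a => e (g a)) = blade e (List.ofFn g) := by
  apply toExt.injective
  rw [wedgeC, LinearEquiv.apply_symm_apply, toExt_blade he (List.nodup_ofFn.2 hg),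
    ExteriorAlgebra.ιMulti_apply, List.map_ofFn, List.map_ofFn]
  rfl

end Blade

lemma mul_eq_mul_map_of_forall_ι {R M : Type*} [CommRing R] [AddCommGroup M] [Module R M]
    {Q : QuadraticForm R M} (f : CliffordAlgebra Q →ₐ[R] CliffordAlgebra Q) {z : CliffordAlgebra Q}
    (h : ∀ m, CliffordAlgebra.ι Q m * z = z * f (CliffordAlgebra.ι Q m)) (x : CliffordAlgebra Q) :
    x * z = z * f x := by
  induction x using CliffordAlgebra.induction with
  | algebraMap r => rw [AlgHom.commutes, Algebra.commutes]
  | ι m => exact h m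
  | mul a b ha hb => rw [mul_assoc, hb, ← mul_assoc, ha, mul_assoc, map_mul]
  | add a b ha hb => rw [add_mul, ha, hb, map_add, mul_add]

section VolumeElement

variable (b : OrthonormalBasis (Fin n) ℝ V)

noncomputable def volumeElement : CA (V := V) := blade b (List.finRange n)

lemma cvec_mul_volumeElement (v : V) :
    cvec v * volumeElement b = (-1 : ℝ) ^ (n + 1) • (volumeElement b * cvec v) := by
  have hbasis (i : Fin n) :
      cvec (b i) * volumeElement b = (-1 : ℝ) ^ (n + 1) • (volumeElement b * cvec (b i)) := by
    rw [volumeElement, cvec_mul_blade b.orthonormal, List.length_finRange,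
      List.count_eq_one_of_mem (List.nodup_finRange n) (List.mem_finRange i)]
  rw [← b.sum_repr' v, cvec, map_sum, Finset.sum_mul, Finset.mul_sum, Finset.smul_sum]
  refine Finset.sum_congr rfl fun i _ => ?_
  rw [map_smul, smul_mul_assoc, mul_smul_comm, ← cvec, hbasis, smul_comm]

variable {b}

/-- By `cvec_mul_volumeElement`, `x Ω = Ω α(x)` where `α` is the identity for odd `n` and the
grade involution for even `n`. -/
lemma commute_volumeElement_of_involute_eq {x : CA (V := V)}
    (hx : CliffordAlgebra.involute x = x) : Commute x (volumeElement b) := by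
  rcases n.even_or_odd with hn | hn
  · have := mul_eq_mul_map_of_forall_ι CliffordAlgebra.involute (z := volumeElement b)
      (fun v => by rw [CliffordAlgebra.involute_ι, ← cvec, cvec_mul_volumeElement,
        hn.add_one.neg_one_pow, neg_one_smul, mul_neg]) x
    rwa [hx] at this
  · exact mul_eq_mul_map_of_forall_ι (AlgHom.id ℝ _) (z := volumeElement b)
      (fun v => by rw [← cvec, cvec_mul_volumeElement, hn.add_one.neg_one_pow, one_smul]; rfl) x

end VolumeElement

lemma cinner_smul_left (r : ℝ) (u v : CA (V := V)) : cinner (r • u) v = r * cinner u v := by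
  simp [cinner, scalarPart]

lemma cinner_smul_right (r : ℝ) (u v : CA (V := V)) : cinner u (r • v) = r * cinner u v := by
  simp [cinner, scalarPart]

lemma cinner_mul_volumeElement {b : OrthonormalBasis (Fin n) ℝ V} {u v : CA (V := V)}
    (h : Commute (CliffordAlgebra.reverse (CliffordAlgebra.involute u) * v) (volumeElement b)) :
    cinner (u * volumeElement b) (v * volumeElement b) = cinner u v := by
  rw [cinner, cinner, map_mul, CliffordAlgebra.reverse.map_mul, mul_assoc, ← mul_assoc _ v,
    h.eq, ← mul_assoc, ← mul_assoc, volumeElement,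
    reverse_involute_blade_mul_blade b.orthonormal, one_mul]

lemma involute_reverse_involute_mul_eq_self {u v : CA (V := V)} {s : ℝ}
    (hu : CliffordAlgebra.involute u = s • u) (hv : CliffordAlgebra.involute v = s • v) :
    CliffordAlgebra.involute (CliffordAlgebra.reverse (CliffordAlgebra.involute u) * v) =
      CliffordAlgebra.reverse (CliffordAlgebra.involute u) * v := by
  rw [map_mul, ← CliffordAlgebra.reverse_involute, CliffordAlgebra.involute_involute, hv, hu,
    map_smul, mul_smul_comm, smul_mul_assoc]

lemma adC_smul (φ : CA (V := V)) (r : ℝ) (u : CA (V := V)) : adC φ (r • u) = r • adC φ u := by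
  unfold adC
  rw [mul_smul_comm, smul_mul_assoc, smul_sub]

lemma adC_mul_of_commute {φ z : CA (V := V)} (h : Commute φ z) (u : CA (V := V)) :
    adC φ (u * z) = adC φ u * z := by
  unfold adC
  rw [sub_mul, mul_assoc, ← h.eq, mul_assoc, mul_assoc]

lemma involute_adC {φ u : CA (V := V)} {s : ℝ} (hφ : CliffordAlgebra.involute φ = φ)
    (hu : CliffordAlgebra.involute u = s • u) :
    CliffordAlgebra.involute (adC φ u) = s • adC φ u := by
  unfold adC
  rw [map_sub, map_mul, map_mul, hφ, hu, mul_smul_comm, smul_mul_assoc, smul_sub]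

lemma cinner_adC_blade_of_mul_eq_volumeElement {b : OrthonormalBasis (Fin n) ℝ V}
    {S T : List (Fin n)} (hS : S.Nodup) (hST : blade b S * blade b T = volumeElement b)
    {φ ψ : CA (V := V)} (hφ : CliffordAlgebra.involute φ = φ)
    (hψ : CliffordAlgebra.involute ψ = ψ) :
    cinner (adC φ (blade b T)) (adC ψ (blade b T)) =
      cinner (adC φ (blade b S)) (adC ψ (blade b S)) := by
  obtain ⟨k, hk⟩ := exists_blade_mul_self_of_nodup b.orthonormal hS
  have hT : blade b T = (-1 : ℝ) ^ k • (blade b S * volumeElement b) := by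
    rw [← hST, ← mul_assoc, hk, smul_mul_assoc, one_mul, smul_smul, ← mul_pow]
    simp
  have hcomm := commute_volumeElement_of_involute_eq (b := b) <|
    involute_reverse_involute_mul_eq_self (involute_adC hφ (involute_blade (e := b) S))
      (involute_adC hψ (involute_blade (e := b) S))
  rw [hT, adC_smul, adC_smul, adC_mul_of_commute (commute_volumeElement_of_involute_eq hφ),
    adC_mul_of_commute (commute_volumeElement_of_involute_eq hψ), cinner_smul_left,
    cinner_smul_right, cinner_mul_volumeElement hcomm, ← mul_assoc, ← mul_pow]
  simp

variable (V)

/-- `N_p(ω)(e₁∧…∧e_p, e₁∧…∧e_p) = N_{n−p}(ω)(e_{p+1}∧…∧e_n, e_{p+1}∧…∧e_n)`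
for `1 ≤ p ≤ n−1` (the sectional-curvature identity expressing `∗N_p(ω) = N_{n−p}(ω)`). -/
theorem weitzenbock_hodge_dual (n : ℕ) (b : OrthonormalBasis (Fin n) ℝ V)
    (ω : DF V 2 2) (p : ℕ) (hpn : p + 1 ≤ n) :
    Nw b p (rawDF ω)
        (fun a => b (Fin.castLE (by omega) a)) (fun a => b (Fin.castLE (by omega) a)) =
      Nw b (n - p) (rawDF ω)
        (fun a => b (Fin.cast (show p + (n - p) = n by omega) (Fin.natAdd p a)))
        (fun a => b (Fin.cast (show p + (n - p) = n by omega) (Fin.natAdd p a))) := by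
  have hle : p ≤ n := by omega
  have hsum : p + (n - p) = n := by omega
  have hinjS : Function.Injective (Fin.castLE hle) := Fin.castLE_injective hle
  have hinjT : Function.Injective fun a : Fin (n - p) => Fin.cast hsum (Fin.natAdd p a) :=
    (Fin.cast_injective hsum).comp (Fin.natAdd_injective _ p)
  have hsplit : blade b (List.ofFn (Fin.castLE hle)) *
      blade b (List.ofFn fun a : Fin (n - p) => Fin.cast hsum (Fin.natAdd p a)) =
        volumeElement b := by
    rw [← blade_append, volumeElement, ← List.ofFn_id, List.ofFn_congr hsum.symm, List.ofFn_add]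
    rfl
  simp only [Nw, wedgeC_eq_blade b.orthonormal hinjS, wedgeC_eq_blade b.orthonormal hinjT,
    cinner_adC_blade_of_mul_eq_volumeElement (List.nodup_ofFn.2 hinjS) hsplit,
    involute_cvec_mul_cvec]

end Weitzenbock
end
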